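/- Let A ∈ ℝ^{m×m} and C ∈ ℝ^{n×n} be symmetric real matrices, B ∈ ℝ^{m×n}, η ∈ ℝ, and set μ = min(λ_min(BBᵀ), λ_min(BᵀB)) and c = max(‖I_m − ηA‖_op², ‖I_n + ηC‖_op²) / (1 + η²μ). Suppose c < 1 and that the sequence (θ_t, φ_t)_{t≥0} satisfies the implicit linearized SPPM recursion θ_{t+1} = θ_t − ηAθ_t − ηBφ_{t+1}, φ_{t+1} = φ_t + ηBᵀθ_{t+1} + ηCφ_t for all t. Then ‖θ_t‖² + ‖φ_t‖² ≤ c^t (‖θ_0‖² + ‖φ_0‖²) for all t, and in particular (θ_t, φ_t) converges to (0, 0) as t → ∞. -/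

import Mathlib

/-! The implicit SPPM step rewrites as `(1 - ηA)θ = θ' + ηBφ'` and `(1 + ηC)φ = φ' - ηBᵀθ'`.
The coupling `(θ', φ') ↦ (ηBφ', -ηBᵀθ')` is skew, so the cross terms cancel when the squared norms
of the two right-hand sides are added, leaving `‖θ'‖² + ‖φ'‖² + η²(‖Bφ'‖² + ‖Bᵀθ'‖²)`, which is at
least `(1 + η²μ)(‖θ'‖² + ‖φ'‖²)` by the Rayleigh bounds for `BᵀB` and `BBᵀ`. The left-hand sides
are at most `max(‖1 - ηA‖², ‖1 + ηC‖²)(‖θ‖² + ‖φ‖²)`, so each step contracts the squared norm by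
the factor `c`. -/

open Matrix Filter Topology

/-- The squared Euclidean norm of a vector `v : ι → ℝ`. -/
noncomputable def eNormSq {ι : Type*} [Fintype ι] (v : ι → ℝ) : ℝ :=
  ‖(EuclideanSpace.equiv ι ℝ).symm v‖ ^ 2

open scoped MatrixOrder

lemma eNormSq_eq_dotProduct {ι : Type*} [Fintype ι] (v : ι → ℝ) : eNormSq v = v ⬝ᵥ v := by
  rw [eNormSq, EuclideanSpace.norm_eq, Real.sq_sqrt (by positivity)]
  simp [dotProduct, sq]

lemma dotProduct_self_nonneg {ι R : Type*} [Fintype ι] [Ring R] [LinearOrder R]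
    [IsStrictOrderedRing R] (v : ι → R) : 0 ≤ v ⬝ᵥ v :=
  Finset.sum_nonneg fun i _ => mul_self_nonneg (v i)

lemma tendsto_zero_of_tendsto_dotProduct_self {ι α : Type*} [Fintype ι] {l : Filter α}
    {v : α → ι → ℝ} (h : Tendsto (fun a => v a ⬝ᵥ v a) l (𝓝 0)) : Tendsto v l (𝓝 0) := by
  let e := EuclideanSpace.equiv ι ℝ
  have hnorm : Tendsto (fun a => ‖e.symm (v a)‖) l (𝓝 0) := by
    simpa only [← eNormSq_eq_dotProduct, eNormSq, Real.sqrt_sq (norm_nonneg _),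
      Real.sqrt_zero] using h.sqrt
  have := (e.continuous.tendsto 0).comp (tendsto_zero_iff_norm_tendsto_zero.mpr hnorm)
  simpa only [map_zero, Function.comp_def, ContinuousLinearEquiv.apply_symm_apply] using this

lemma le_pow_mul_of_le_mul_succ {α : Type*} [MonoidWithZero α] [PartialOrder α]
    [PosMulMono α] {c : α} {u : ℕ → α} (hc : 0 ≤ c) (h : ∀ t, u (t + 1) ≤ c * u t) :
    ∀ t, u t ≤ c ^ t * u 0
  | 0 => by simp
  | t + 1 => calc
      u (t + 1) ≤ c * u t := h t
      _ ≤ c * (c ^ t * u 0) := mul_le_mul_of_nonneg_left (le_pow_mul_of_le_mul_succ hc h t) hc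
      _ = c ^ (t + 1) * u 0 := by rw [pow_succ', mul_assoc]

section Matrix

variable {k l : Type*} [Fintype k] [Fintype l]

lemma mulVec_dotProduct_mulVec_self (B : Matrix k l ℝ) (y : l → ℝ) :
    (B *ᵥ y) ⬝ᵥ (B *ᵥ y) = y ⬝ᵥ ((Bᵀ * B) *ᵥ y) := by
  rw [← mulVec_mulVec, mulVec_transpose, dotProduct_comm y, ← dotProduct_mulVec]

lemma dotProduct_mulVec_self_le_opNorm_sq [DecidableEq k] (M : Matrix k k ℝ) (x : k → ℝ) :
    (M *ᵥ x) ⬝ᵥ (M *ᵥ x) ≤ ‖toEuclideanCLM (𝕜 := ℝ) M‖ ^ 2 * (x ⬝ᵥ x) := by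
  simp only [← eNormSq_eq_dotProduct, eNormSq, ← mul_pow]
  gcongr
  exact (toEuclideanCLM (𝕜 := ℝ) M).le_opNorm _

lemma Matrix.IsHermitian.mul_dotProduct_self_le [DecidableEq k] {M : Matrix k k ℝ}
    (hM : M.IsHermitian) {r : ℝ} (hr : r ∈ lowerBounds (Set.range hM.eigenvalues)) (x : k → ℝ) :
    r * (x ⬝ᵥ x) ≤ x ⬝ᵥ (M *ᵥ x) := by
  have hle : algebraMap ℝ (Matrix k k ℝ) r ≤ M := by
    refine algebraMap_le_of_le_spectrum (fun s hs => hr ?_) hM.isSelfAdjoint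
    rwa [hM.spectrum_real_eq_range_eigenvalues] at hs
  simpa [sub_mulVec, dotProduct_sub, Algebra.algebraMap_eq_smul_one, smul_mulVec] using
    (le_iff.mp hle).dotProduct_mulVec_nonneg x

lemma mul_dotProduct_self_le_mulVec_dotProduct_mulVec_self [DecidableEq l] (B : Matrix k l ℝ)
    (hB : (Bᵀ * B).IsHermitian) {r : ℝ} (hr : r ∈ lowerBounds (Set.range hB.eigenvalues))
    (y : l → ℝ) : r * (y ⬝ᵥ y) ≤ (B *ᵥ y) ⬝ᵥ (B *ᵥ y) := by
  rw [mulVec_dotProduct_mulVec_self]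
  exact hB.mul_dotProduct_self_le hr y

lemma dotProduct_self_add_smul_mulVec_add_sub_smul_transpose_mulVec (B : Matrix k l ℝ)
    (η : ℝ) (x : k → ℝ) (y : l → ℝ) :
    (x + η • (B *ᵥ y)) ⬝ᵥ (x + η • (B *ᵥ y)) + (y - η • (Bᵀ *ᵥ x)) ⬝ᵥ (y - η • (Bᵀ *ᵥ x)) =
      x ⬝ᵥ x + y ⬝ᵥ y + η ^ 2 * ((B *ᵥ y) ⬝ᵥ (B *ᵥ y) + (Bᵀ *ᵥ x) ⬝ᵥ (Bᵀ *ᵥ x)) := by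
  have hskew : x ⬝ᵥ (B *ᵥ y) = y ⬝ᵥ (Bᵀ *ᵥ x) := by
    rw [mulVec_transpose, dotProduct_comm y, ← dotProduct_mulVec]
  simp only [add_dotProduct, dotProduct_add, sub_dotProduct, dotProduct_sub, smul_dotProduct,
    dotProduct_smul, smul_eq_mul, dotProduct_comm _ x, dotProduct_comm _ y, hskew]
  ring

variable [DecidableEq k] [DecidableEq l]

theorem sppm_step_contraction (A : Matrix k k ℝ) (C : Matrix l l ℝ) (B : Matrix k l ℝ)
    {η μ : ℝ} (hB : ∀ y, μ * (y ⬝ᵥ y) ≤ (B *ᵥ y) ⬝ᵥ (B *ᵥ y))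
    (hBt : ∀ x, μ * (x ⬝ᵥ x) ≤ (Bᵀ *ᵥ x) ⬝ᵥ (Bᵀ *ᵥ x))
    {θ θ' : k → ℝ} {φ φ' : l → ℝ}
    (hθ : θ' = θ - η • (A *ᵥ θ) - η • (B *ᵥ φ'))
    (hφ : φ' = φ + η • (Bᵀ *ᵥ θ') + η • (C *ᵥ φ)) :
    (1 + η ^ 2 * μ) * (θ' ⬝ᵥ θ' + φ' ⬝ᵥ φ') ≤
      max (‖toEuclideanCLM (𝕜 := ℝ) ((1 : Matrix k k ℝ) - η • A)‖ ^ 2)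
        (‖toEuclideanCLM (𝕜 := ℝ) ((1 : Matrix l l ℝ) + η • C)‖ ^ 2) *
        (θ ⬝ᵥ θ + φ ⬝ᵥ φ) := by
  have hθ_implicit : (1 - η • A) *ᵥ θ = θ' + η • (B *ᵥ φ') := by
    rw [sub_mulVec, one_mulVec, smul_mulVec, hθ]
    abel
  have hφ_implicit : (1 + η • C) *ᵥ φ = φ' - η • (Bᵀ *ᵥ θ') := by
    rw [add_mulVec, one_mulVec, smul_mulVec, hφ]
    abel
  have hcoupling : η ^ 2 * μ * (θ' ⬝ᵥ θ' + φ' ⬝ᵥ φ') ≤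
      η ^ 2 * ((B *ᵥ φ') ⬝ᵥ (B *ᵥ φ') + (Bᵀ *ᵥ θ') ⬝ᵥ (Bᵀ *ᵥ θ')) := by
    rw [mul_assoc]
    gcongr
    linarith [hB φ', hBt θ']
  calc (1 + η ^ 2 * μ) * (θ' ⬝ᵥ θ' + φ' ⬝ᵥ φ')
      ≤ θ' ⬝ᵥ θ' + φ' ⬝ᵥ φ' + η ^ 2 * ((B *ᵥ φ') ⬝ᵥ (B *ᵥ φ') + (Bᵀ *ᵥ θ') ⬝ᵥ (Bᵀ *ᵥ θ')) := by
        linarith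
    _ = ((1 - η • A) *ᵥ θ) ⬝ᵥ ((1 - η • A) *ᵥ θ) + ((1 + η • C) *ᵥ φ) ⬝ᵥ ((1 + η • C) *ᵥ φ) := by
        rw [hθ_implicit, hφ_implicit,
          dotProduct_self_add_smul_mulVec_add_sub_smul_transpose_mulVec]
    _ ≤ _ := by
        rw [mul_add]
        gcongr
        · exact (dotProduct_mulVec_self_le_opNorm_sq _ θ).trans
            (mul_le_mul_of_nonneg_right (le_max_left _ _) (dotProduct_self_nonneg θ))
        · exact (dotProduct_mulVec_self_le_opNorm_sq _ φ).trans
            (mul_le_mul_of_nonneg_right (le_max_right _ _) (dotProduct_self_nonneg φ))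

end Matrix

theorem linearized_sppm_asymptotic_convergence_general
    (m n : ℕ) (A : Matrix (Fin m) (Fin m) ℝ) (C : Matrix (Fin n) (Fin n) ℝ)
    (B : Matrix (Fin m) (Fin n) ℝ) (η : ℝ)
    (hBBt : (B * Bᵀ).IsHermitian) (hBtB : (Bᵀ * B).IsHermitian)
    (lmin₁ lmin₂ μ c : ℝ)
    (hlmin₁ : IsLeast (Set.range hBBt.eigenvalues) lmin₁)
    (hlmin₂ : IsLeast (Set.range hBtB.eigenvalues) lmin₂)
    (hμ : μ = min lmin₁ lmin₂)
    (hc : c = max (‖Matrix.toEuclideanCLM (𝕜 := ℝ) ((1 : Matrix (Fin m) (Fin m) ℝ) - η • A)‖ ^ 2)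
            (‖Matrix.toEuclideanCLM (𝕜 := ℝ) ((1 : Matrix (Fin n) (Fin n) ℝ) + η • C)‖ ^ 2) /
          (1 + η ^ 2 * μ))
    (hc1 : c < 1)
    (Θ : ℕ → Fin m → ℝ) (Φ : ℕ → Fin n → ℝ)
    (hΘ : ∀ t : ℕ, Θ (t + 1) = Θ t - η • (A *ᵥ Θ t) - η • (B *ᵥ Φ (t + 1)))
    (hΦ : ∀ t : ℕ, Φ (t + 1) = Φ t + η • (Bᵀ *ᵥ Θ (t + 1)) + η • (C *ᵥ Φ t)) :
    (∀ t : ℕ, eNormSq (Θ t) + eNormSq (Φ t) ≤ c ^ t * (eNormSq (Θ 0) + eNormSq (Φ 0))) ∧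
    Tendsto (fun t => (Θ t, Φ t)) atTop (𝓝 (0, 0)) := by
  simp only [eNormSq_eq_dotProduct]
  have hμ_nonneg : 0 ≤ μ := by
    obtain ⟨⟨i, rfl⟩, -⟩ := hlmin₁
    obtain ⟨⟨j, rfl⟩, -⟩ := hlmin₂
    exact hμ ▸ le_min (eigenvalues_self_mul_conjTranspose_nonneg B i)
      (eigenvalues_conjTranspose_mul_self_nonneg B j)
  have hden : 0 < 1 + η ^ 2 * μ := by positivity
  have hc0 : 0 ≤ c := hc ▸ div_nonneg (le_max_of_le_left (sq_nonneg _)) hden.le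
  have hB (y : Fin n → ℝ) : μ * (y ⬝ᵥ y) ≤ (B *ᵥ y) ⬝ᵥ (B *ᵥ y) :=
    mul_dotProduct_self_le_mulVec_dotProduct_mulVec_self B hBtB
      (fun _ hx => hμ ▸ (min_le_right _ _).trans (hlmin₂.2 hx)) y
  have hBt (x : Fin m → ℝ) : μ * (x ⬝ᵥ x) ≤ (Bᵀ *ᵥ x) ⬝ᵥ (Bᵀ *ᵥ x) :=
    mul_dotProduct_self_le_mulVec_dotProduct_mulVec_self Bᵀ hBBt
      (fun _ hx => hμ ▸ (min_le_left _ _).trans (hlmin₁.2 hx)) x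
  have decay := le_pow_mul_of_le_mul_succ (u := fun t => Θ t ⬝ᵥ Θ t + Φ t ⬝ᵥ Φ t) hc0 fun t => by
    rw [hc, div_mul_eq_mul_div, le_div_iff₀ hden, mul_comm]
    exact sppm_step_contraction A C B hB hBt (hΘ t) (hΦ t)
  refine ⟨decay, ?_⟩
  have hgeom : Tendsto (fun t => c ^ t * (Θ 0 ⬝ᵥ Θ 0 + Φ 0 ⬝ᵥ Φ 0)) atTop (𝓝 0) := by
    simpa using (tendsto_pow_atTop_nhds_zero_of_lt_one hc0 hc1).mul_const _
  have hΘ0 := squeeze_zero (fun t => dotProduct_self_nonneg (Θ t))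
    (fun t => by linarith [decay t, dotProduct_self_nonneg (Φ t)]) hgeom
  have hΦ0 := squeeze_zero (fun t => dotProduct_self_nonneg (Φ t))
    (fun t => by linarith [decay t, dotProduct_self_nonneg (Θ t)]) hgeom
  exact (tendsto_zero_of_tendsto_dotProduct_self hΘ0).prodMk_nhds
    (tendsto_zero_of_tendsto_dotProduct_self hΦ0)

/-- if the contraction factor `c < 1` then the linearized SPPM iterates decay
geometrically and converge to the stationary point (asymptotic convergence part of Theorem 2). -/
theorem linearized_sppm_asymptotic_convergence
    (m n : ℕ) (A : Matrix (Fin m) (Fin m) ℝ) (C : Matrix (Fin n) (Fin n) ℝ)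
    (B : Matrix (Fin m) (Fin n) ℝ) (η : ℝ)
    (hA : A.IsHermitian) (hC : C.IsHermitian)
    (hBBt : (B * Bᵀ).IsHermitian) (hBtB : (Bᵀ * B).IsHermitian)
    (lmin₁ lmin₂ μ c : ℝ)
    (hlmin₁ : IsLeast (Set.range hBBt.eigenvalues) lmin₁)
    (hlmin₂ : IsLeast (Set.range hBtB.eigenvalues) lmin₂)
    (hμ : μ = min lmin₁ lmin₂)
    (hc : c = max (‖Matrix.toEuclideanCLM (𝕜 := ℝ) ((1 : Matrix (Fin m) (Fin m) ℝ) - η • A)‖ ^ 2)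
            (‖Matrix.toEuclideanCLM (𝕜 := ℝ) ((1 : Matrix (Fin n) (Fin n) ℝ) + η • C)‖ ^ 2) /
          (1 + η ^ 2 * μ))
    (hc1 : c < 1)
    (Θ : ℕ → Fin m → ℝ) (Φ : ℕ → Fin n → ℝ)
    (hΘ : ∀ t : ℕ, Θ (t + 1) = Θ t - η • (A *ᵥ Θ t) - η • (B *ᵥ Φ (t + 1)))
    (hΦ : ∀ t : ℕ, Φ (t + 1) = Φ t + η • (Bᵀ *ᵥ Θ (t + 1)) + η • (C *ᵥ Φ t)) :
    (∀ t : ℕ, eNormSq (Θ t) + eNormSq (Φ t) ≤ c ^ t * (eNormSq (Θ 0) + eNormSq (Φ 0))) ∧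
    Tendsto (fun t => (Θ t, Φ t)) atTop (𝓝 (0, 0)) :=
  linearized_sppm_asymptotic_convergence_general m n A C B η hBBt hBtB lmin₁ lmin₂ μ c hlmin₁ hlmin₂
    hμ hc hc1 Θ Φ hΘ hΦ
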